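/- arXiv:1612.03687 — 3 statements merged into one kernel-verified Lean document; each statement's English description precedes it below -/
import Mathlib

section
/- Let $M_{12}, M_{14}, M_{32} > 0$, set $M_{34} := M_{14} + M_{32} - M_{12}$ and assume $M_{34} > 0$, and let $M = M_{12} + M_{34}$. Then the system of equations $a_1 a_3 = a_2 a_4$, $a_1 + a_2 = M_{12}$, $a_1 + a_4 = M_{14}$, $a_2 + a_3 = M_{32}$ has a unique solution in positive reals $(a_1, a_2, a_3, a_4)$, given by $a_1 = M_{12}M_{14}/M$, $a_2 = M_{12}M_{32}/M$, $a_3 = M_{32}M_{34}/M$, $a_4 = M_{14}M_{34}/M$. -/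
theorem stmt1 (M12 M14 M32 M34 M : ℝ)
    (h12 : 0 < M12) (h14 : 0 < M14) (h32 : 0 < M32)
    (hM34 : M34 = M14 + M32 - M12) (h34 : 0 < M34) (hM : M = M12 + M34) :
    ∀ a1 a2 a3 a4 : ℝ,
      (0 < a1 ∧ 0 < a2 ∧ 0 < a3 ∧ 0 < a4 ∧
        a1 * a3 = a2 * a4 ∧ a1 + a2 = M12 ∧ a1 + a4 = M14 ∧ a2 + a3 = M32)
      ↔ (a1 = M12 * M14 / M ∧ a2 = M12 * M32 / M ∧
          a3 = M32 * M34 / M ∧ a4 = M14 * M34 / M) := by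
  intro a1 a2 a3 a4
  have hMpos : 0 < M := by linarith
  have hMne : M ≠ 0 := ne_of_gt hMpos
  constructor
  · rintro ⟨p1, p2, p3, p4, hdb, e12, e14, e32⟩
    have ha1 : a1 * M = M12 * M14 := by nlinarith
    have h1 : a1 = M12 * M14 / M := by field_simp; linarith
    refine ⟨h1, ?_, ?_, ?_⟩ <;> field_simp <;> nlinarith
  · rintro ⟨h1, h2, h3, h4⟩
    subst h1 h2 h3 h4
    refine ⟨by positivity, by positivity, by positivity, by positivity, ?_, ?_, ?_, ?_⟩ <;>
      field_simp <;> ring_nf <;> nlinarith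
end

section
/- Let $a_{1,\infty}, a_{2,\infty}, a_{3,\infty}, a_{4,\infty} > 0$ satisfy the detailed balance relation $a_{1,\infty}a_{3,\infty} = a_{2,\infty}a_{4,\infty}$, and define $L : \mathbb{R}^4 \to \mathbb{R}^4$ by $(Lh)_i = (-1)^i (a_{3,\infty} h_1 + a_{1,\infty} h_3 - a_{4,\infty} h_2 - a_{2,\infty} h_4)$ and $\langle h, f \rangle = \sum_{i=1}^4 h_i f_i / a_{i,\infty}$. Then for every $h \in \mathbb{R}^4$, $\langle h, Lh \rangle = - C \left( \frac{h_1}{a_{1,\infty}} + \frac{h_3}{a_{3,\infty}} - \frac{h_2}{a_{2,\infty}} - \frac{h_4}{a_{4,\infty}} \right)^2$ where $C = a_{1,\infty} a_{3,\infty}$. In particular $\langle h, Lh \rangle \leq 0$. -/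
theorem stmt3 (a : Fin 4 → ℝ) (ha : ∀ i, 0 < a i)
    (hdb : a 0 * a 2 = a 1 * a 3)
    (L : (Fin 4 → ℝ) → (Fin 4 → ℝ))
    (hL : ∀ h : Fin 4 → ℝ, ∀ i : Fin 4,
      L h i = (-1 : ℝ) ^ ((i : ℕ) + 1) *
        (a 2 * h 0 + a 0 * h 2 - a 3 * h 1 - a 1 * h 3)) :
    ∀ h : Fin 4 → ℝ,
      (∑ i, h i * L h i / a i)
        = -(a 0 * a 2) * (h 0 / a 0 + h 2 / a 2 - h 1 / a 1 - h 3 / a 3) ^ 2 ∧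
      (∑ i, h i * L h i / a i) ≤ 0 := by
  intro h
  have h0 := (ha 0).ne'
  have h1 := (ha 1).ne'
  have h2 := (ha 2).ne'
  have h3 := (ha 3).ne'
  have key : (∑ i, h i * L h i / a i)
      = -(a 0 * a 2) * (h 0 / a 0 + h 2 / a 2 - h 1 / a 1 - h 3 / a 3) ^ 2 := by
    rw [Fin.sum_univ_four, hL h 0, hL h 1, hL h 2, hL h 3]
    have e3 : ((3 : Fin 4) : ℕ) = 3 := rfl
    simp only [Fin.val_zero, Fin.val_one, Fin.val_two, e3]
    norm_num
    have ha3 : a 3 = a 0 * a 2 / a 1 := by field_simp; linarith [hdb]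
    rw [ha3]
    field_simp
    ring
  refine ⟨key, ?_⟩
  rw [key]
  have : 0 ≤ a 0 * a 2 := le_of_lt (mul_pos (ha 0) (ha 2))
  nlinarith [sq_nonneg (h 0 / a 0 + h 2 / a 2 - h 1 / a 1 - h 3 / a 3)]
end

section
/- In the setting of the general linearised reaction operator: let $W$ be the $R \times I$ real matrix with rows $\beta^r - \alpha^r$, and let $X = \operatorname{Im} W^\top \subseteq \mathbb{R}^I$. Let $L : \mathbb{R}^I \to \mathbb{R}^I$ be $(Lh)_i = - \sum_{r=1}^R k^r (\alpha^r_i - \beta^r_i) \sum_j (\alpha^r_j - \beta^r_j) h_j / a_{j,\infty}$ with all $k^r > 0$ and all $a_{j,\infty} > 0$. Then $L$ maps $X$ into $X$, and if $h \in X$ satisfies $Lh = 0$ then $h = 0$. Consequently there exists $\lambda > 0$ such that $\langle h, Lh \rangle \leq -\lambda \|h\|^2$ for all $h \in X$, where $\langle h, f \rangle = \sum_i h_i f_i / a_{i,\infty}$. -/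
open Matrix

theorem stmt6 (I R : ℕ) (k : Fin R → ℝ) (hk : ∀ r, 0 < k r)
    (a : Fin I → ℝ) (ha : ∀ i, 0 < a i)
    (α β : Fin R → Fin I → ℝ)
    (W : Matrix (Fin R) (Fin I) ℝ) (hW : ∀ r i, W r i = β r i - α r i)
    (L : (Fin I → ℝ) → (Fin I → ℝ))
    (hL : ∀ h : Fin I → ℝ, ∀ i : Fin I,
      L h i = -∑ r, k r * (α r i - β r i) * ∑ j, (α r j - β r j) * h j / a j)
    (X : Submodule ℝ (Fin I → ℝ))
    (hX : X = LinearMap.range (Matrix.mulVecLin Wᵀ)) :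
    (∀ h ∈ X, L h ∈ X) ∧
    (∀ h ∈ X, L h = 0 → h = 0) ∧
    ∃ lam > (0 : ℝ), ∀ h ∈ X,
      ∑ i, h i * L h i / a i ≤ -lam * ∑ i, h i * h i / a i := by
  classical
  set c : (Fin I → ℝ) → Fin R → ℝ := fun h r => ∑ j, (α r j - β r j) * h j / a j with hc
  -- L h as image of Wᵀ
  have key1 : ∀ h : Fin I → ℝ, L h = Wᵀ.mulVec (fun r => k r * c h r) := by
    intro h
    funext i
    rw [hL h i, Matrix.mulVec]
    simp only [dotProduct, Matrix.transpose_apply]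
    rw [← Finset.sum_neg_distrib]
    refine Finset.sum_congr rfl fun r _ => ?_
    rw [hW r i]
    ring
  have memX : ∀ h : Fin I → ℝ, L h ∈ X := by
    intro h
    rw [hX]
    exact ⟨fun r => k r * c h r, (key1 h).symm⟩
  -- quadratic form identity
  have key2 : ∀ h : Fin I → ℝ,
      ∑ i, h i * L h i / a i = -∑ r, k r * (c h r) ^ 2 := by
    intro h
    have step1 : ∀ i, h i * L h i / a i
        = ∑ r, -(k r * c h r * ((α r i - β r i) * h i / a i)) := by
      intro i
      rw [hL h i, mul_neg, neg_div, Finset.mul_sum, Finset.sum_div,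
        ← Finset.sum_neg_distrib]
      exact Finset.sum_congr rfl fun r _ => by rw [hc]; ring
    calc ∑ i, h i * L h i / a i
        = ∑ i, ∑ r, -(k r * c h r * ((α r i - β r i) * h i / a i)) :=
          Finset.sum_congr rfl fun i _ => step1 i
      _ = ∑ r, ∑ i, -(k r * c h r * ((α r i - β r i) * h i / a i)) :=
          Finset.sum_comm
      _ = -∑ r, k r * (c h r) ^ 2 := by
          rw [← Finset.sum_neg_distrib]
          refine Finset.sum_congr rfl fun r _ => ?_
          rw [Finset.sum_neg_distrib, ← Finset.mul_sum]
          rw [show (∑ i, (α r i - β r i) * h i / a i) = c h r from rfl]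
          ring
  -- kernel triviality
  have key3 : ∀ h ∈ X, (∀ r, c h r = 0) → h = 0 := by
    intro h hh hcz
    rw [hX] at hh
    obtain ⟨v, hv⟩ := hh
    have hv' : ∀ i, h i = ∑ r, (β r i - α r i) * v r := by
      intro i
      rw [← hv]
      simp only [Matrix.mulVecLin_apply, Matrix.mulVec, dotProduct,
        Matrix.transpose_apply]
      exact Finset.sum_congr rfl fun r _ => by rw [hW r i]
    have hBzero : ∑ i, h i * h i / a i = 0 := by
      have : ∑ i, h i * h i / a i
          = ∑ r, v r * (-(c h r)) := by
        calc ∑ i, h i * h i / a i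
            = ∑ i, ∑ r, -(v r * ((α r i - β r i) * h i / a i)) := by
              refine Finset.sum_congr rfl fun i _ => ?_
              rw [show h i * h i / a i = (∑ r, (β r i - α r i) * v r) * (h i / a i)
                from by rw [← hv' i]; ring, Finset.sum_mul]
              refine Finset.sum_congr rfl fun r _ => by ring
          _ = ∑ r, ∑ i, -(v r * ((α r i - β r i) * h i / a i)) := Finset.sum_comm
          _ = ∑ r, v r * (-(c h r)) := by
              refine Finset.sum_congr rfl fun r _ => ?_
              rw [Finset.sum_neg_distrib, ← Finset.mul_sum, hc, mul_neg]
      rw [this]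
      simp only [hcz, neg_zero, mul_zero, Finset.sum_const_zero]
    have hterm : ∀ i ∈ Finset.univ, (0:ℝ) ≤ h i * h i / a i := fun i _ =>
      div_nonneg (mul_self_nonneg _) (le_of_lt (ha i))
    have := (Finset.sum_eq_zero_iff_of_nonneg hterm).1 hBzero
    funext i
    have h0 : h i * h i / a i = 0 := this i (Finset.mem_univ i)
    have : h i * h i = 0 :=
      (div_eq_zero_iff.mp h0).resolve_right (ne_of_gt (ha i))
    exact mul_self_eq_zero.mp this
  have key4 : ∀ h ∈ X, L h = 0 → h = 0 := by
    intro h hh hLz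
    refine key3 h hh fun r => ?_
    have h1 : ∑ i, h i * L h i / a i = 0 := by
      simp [hLz]
    rw [key2 h] at h1
    have h2 : ∑ r, k r * (c h r) ^ 2 = 0 := by linarith
    have hterm : ∀ r' ∈ Finset.univ, (0:ℝ) ≤ k r' * (c h r') ^ 2 := fun r' _ =>
      mul_nonneg (le_of_lt (hk r')) (sq_nonneg _)
    have := (Finset.sum_eq_zero_iff_of_nonneg hterm).1 h2 r (Finset.mem_univ r)
    have := (mul_eq_zero.mp this).resolve_left (ne_of_gt (hk r))
    exact pow_eq_zero_iff (by norm_num) |>.mp this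
  refine ⟨fun h _ => memX h, key4, ?_⟩
  -- spectral gap
  set F : (Fin I → ℝ) → ℝ := fun h => ∑ r, k r * (c h r) ^ 2 with hF
  set B : (Fin I → ℝ) → ℝ := fun h => ∑ i, h i * h i / a i with hB
  have hFnonneg : ∀ h, 0 ≤ F h := fun h =>
    Finset.sum_nonneg fun r _ => mul_nonneg (le_of_lt (hk r)) (sq_nonneg _)
  by_cases hbot : ∀ h ∈ X, h = (0 : Fin I → ℝ)
  · refine ⟨1, one_pos, fun h hh => ?_⟩
    rw [hbot h hh]
    simp
  push_neg at hbot
  obtain ⟨h0, hh0X, hh0⟩ := hbot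
  have hIne : Nonempty (Fin I) := by
    by_contra hne
    exact hh0 (funext fun i => absurd ⟨i⟩ hne)
  -- the compact sphere inside X
  have hScomp : IsCompact ((X : Set (Fin I → ℝ)) ∩ Metric.sphere 0 1) :=
    (isCompact_sphere (0 : Fin I → ℝ) 1).inter_left
      (Submodule.closed_of_finiteDimensional X)
  have hSne : ((X : Set (Fin I → ℝ)) ∩ Metric.sphere 0 1).Nonempty := by
    refine ⟨‖h0‖⁻¹ • h0, X.smul_mem _ hh0X, ?_⟩
    rw [mem_sphere_zero_iff_norm]
    exact norm_smul_inv_norm hh0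
  have hFc : Continuous F := by
    refine continuous_finset_sum _ fun r _ => continuous_const.mul (Continuous.pow ?_ 2)
    exact continuous_finset_sum _ fun j _ =>
      (continuous_const.mul (continuous_apply j)).div_const _
  obtain ⟨x, hxS, hxmin⟩ := hScomp.exists_isMinOn hSne hFc.continuousOn
  have hxnorm : ‖x‖ = 1 := mem_sphere_zero_iff_norm.mp hxS.2
  have hm : 0 < F x := by
    rcases lt_or_eq_of_le (hFnonneg x) with h | h
    · exact h
    have hcz : ∀ r, c x r = 0 := by
      intro r
      have hterm : ∀ r' ∈ Finset.univ, (0:ℝ) ≤ k r' * (c x r') ^ 2 := fun r' _ =>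
        mul_nonneg (le_of_lt (hk r')) (sq_nonneg _)
      have := (Finset.sum_eq_zero_iff_of_nonneg hterm).1 h.symm r (Finset.mem_univ r)
      have := (mul_eq_zero.mp this).resolve_left (ne_of_gt (hk r))
      exact pow_eq_zero_iff (by norm_num) |>.mp this
    have : x = 0 := key3 x hxS.1 hcz
    rw [this, norm_zero] at hxnorm
    norm_num at hxnorm
  set C : ℝ := ∑ i, 1 / a i with hCdef
  have hC : 0 < C :=
    Finset.sum_pos (fun i _ => one_div_pos.mpr (ha i)) Finset.univ_nonempty
  have hBbound : ∀ h : Fin I → ℝ, ‖h‖ = 1 → B h ≤ C := by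
    intro h hn
    refine Finset.sum_le_sum fun i _ => ?_
    have h1 : |h i| ≤ 1 := by
      have := norm_le_pi_norm h i
      rwa [hn, Real.norm_eq_abs] at this
    have h2 : h i * h i ≤ 1 := by nlinarith [abs_nonneg (h i), abs_mul_abs_self (h i)]
    gcongr
    exact (ha i).le
  -- homogeneity
  have hch : ∀ (s : ℝ) (h : Fin I → ℝ) (r : Fin R), c (s • h) r = s * c h r := by
    intro s h r
    rw [hc, Finset.mul_sum]
    refine Finset.sum_congr rfl fun j _ => ?_
    simp only [Pi.smul_apply, smul_eq_mul]
    ring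
  have hFh : ∀ (s : ℝ) (h : Fin I → ℝ), F (s • h) = s ^ 2 * F h := by
    intro s h
    show (∑ r, k r * (c (s • h) r) ^ 2) = s ^ 2 * ∑ r, k r * (c h r) ^ 2
    rw [Finset.mul_sum]
    refine Finset.sum_congr rfl fun r _ => ?_
    rw [hch s h r]
    ring
  have hBh : ∀ (s : ℝ) (h : Fin I → ℝ), B (s • h) = s ^ 2 * B h := by
    intro s h
    rw [hB, Finset.mul_sum]
    refine Finset.sum_congr rfl fun i _ => ?_
    simp only [Pi.smul_apply, smul_eq_mul]
    ring
  refine ⟨F x / C, div_pos hm hC, fun h hh => ?_⟩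
  rw [key2 h]
  have main : F x / C * B h ≤ F h := by
    by_cases hz : h = (0 : Fin I → ℝ)
    · have : B h = 0 := by simp [hB, hz]
      rw [this, mul_zero]
      exact hFnonneg h
    have ht : (0:ℝ) < ‖h‖ := norm_pos_iff.mpr hz
    set u : Fin I → ℝ := ‖h‖⁻¹ • h with hu
    have huS : u ∈ (X : Set (Fin I → ℝ)) ∩ Metric.sphere 0 1 :=
      ⟨X.smul_mem _ hh, mem_sphere_zero_iff_norm.mpr (norm_smul_inv_norm hz)⟩
    have h1 : F x ≤ F u := hxmin huS
    have h2 : B u ≤ C := hBbound u (norm_smul_inv_norm hz)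
    have h3 : F x / C * B u ≤ F u := by
      calc F x / C * B u ≤ F x / C * C := by
            refine mul_le_mul_of_nonneg_left h2 ?_
            exact le_of_lt (div_pos hm hC)
        _ = F x := by field_simp
        _ ≤ F u := h1
    have hhu : h = ‖h‖ • u := by
      rw [hu, smul_smul, mul_inv_cancel₀ (ne_of_gt ht), one_smul]
    calc F x / C * B h = ‖h‖ ^ 2 * (F x / C * B u) := by
          rw [show B h = ‖h‖ ^ 2 * B u from by rw [← hBh]; rw [← hhu]]
          ring
      _ ≤ ‖h‖ ^ 2 * F u := by
          exact mul_le_mul_of_nonneg_left h3 (sq_nonneg _)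
      _ = F h := by rw [← hFh, ← hhu]
  linarith
end
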